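/- The syntactic morphism theorem for synchronous algebras: for every binary relation R ⊆ Σ* × Σ*, there exists a surjective synchronous algebra morphism η_R: Sync(Σ) ↠ A_R recognizing R such that for any surjective morphism φ: Sync(Σ) ↠ B recognizing R, there exists a surjective morphism ψ: B ↠ A_R with ψ ∘ φ = η_R; moreover, A_R is unique up to isomorphism. -/

import Mathlib

/-- Letter-types: `l` for a pair of proper letters, `p` for (letter, padding),
`q` for (padding, letter). -/
inductive LTy | l | p | q
deriving DecidableEq

/-- The five types of (well-formed) synchronous words:
`ll`, `ll→lb` (= `lllb`), `lb`, `ll→bl` (= `llbl`), `bl`. -/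
inductive STy | ll | lllb | lb | llbl | bl
deriving DecidableEq

namespace STy

/-- Letter-type of the first letter. -/
def src : STy → LTy
  | ll => .l | lllb => .l | lb => .p | llbl => .l | bl => .q

/-- Letter-type of the last letter. -/
def tgt : STy → LTy
  | ll => .l | lllb => .p | lb => .p | llbl => .q | bl => .q

/-- `σ = α→β` is compatible with `τ = β'→γ` iff `β = β'` or `β = ll`. -/
def compat (σ τ : STy) : Prop := σ.tgt = τ.src ∨ σ.tgt = LTy.l

/-- Product of compatible types (junk on incompatible pairs). -/
def comp : STy → STy → STy
  | ll, ll => ll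
  | ll, lllb => lllb
  | ll, lb => lllb
  | ll, llbl => llbl
  | ll, bl => llbl
  | lllb, _ => lllb
  | lb, _ => lb
  | llbl, _ => llbl
  | bl, _ => bl

end STy

/-- A synchronous algebra: a `STy`-typed set with a dependency relation and a
partial associative product defined exactly on compatible pairs, monotone with
respect to dependency, with units.  The partial product is modelled as an
`Option`-valued total product. -/
structure SyncAlg where
  A : Type
  ty : A → STy
  dep : A → A → Prop
  mul : A → A → Option A
  dep_refl : ∀ x, dep x x
  dep_symm : ∀ {x y}, dep x y → dep y x
  dep_eq : ∀ {x y}, dep x y → ty x = ty y → x = y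
  mul_defined : ∀ x y, (mul x y).isSome ↔ (ty x).compat (ty y)
  ty_mul : ∀ {x y z}, mul x y = some z → ty z = (ty x).comp (ty y)
  mul_assoc : ∀ x y z,
    (mul x y).bind (fun a => mul a z) = (mul y z).bind (fun b => mul x b)
  dep_mul_left : ∀ {x x' y z z'}, dep x x' →
    mul x y = some z → mul x' y = some z' → dep z z'
  dep_mul_right : ∀ {x x' y z z'}, dep x x' →
    mul y x = some z → mul y x' = some z' → dep z z'
  unit : STy → A
  ty_unit : ∀ τ, ty (unit τ) = τ
  unit_mul : ∀ {τ x z}, mul (unit τ) x = some z → dep z x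
  mul_unit : ∀ {τ x z}, mul x (unit τ) = some z → dep z x
  unit_lllb : mul (unit .ll) (unit .lb) = some (unit .lllb)
  unit_llbl : mul (unit .ll) (unit .bl) = some (unit .llbl)

namespace SyncAlg

/-- A closed subset of a synchronous algebra: saturated under dependency. -/
def Closed (S : SyncAlg) (C : Set S.A) : Prop :=
  ∀ {x y : S.A}, S.dep x y → (x ∈ C ↔ y ∈ C)

/-- Two-sided partial product `x·a·y`. -/
def mul3 (S : SyncAlg) (x a y : S.A) : Option S.A :=
  (S.mul x a).bind fun u => S.mul u y

/-- The syntactic congruence of a subset `C` of a synchronous algebra. -/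
def synCong (S : SyncAlg) (C : Set S.A) (a b : S.A) : Prop :=
  (∀ x y u v, S.mul3 x a y = some u → S.mul3 x b y = some v → (u ∈ C ↔ v ∈ C)) ∧
  (∀ x u v, S.mul x a = some u → S.mul x b = some v → (u ∈ C ↔ v ∈ C)) ∧
  (∀ y u v, S.mul a y = some u → S.mul b y = some v → (u ∈ C ↔ v ∈ C))

/-- Left residual `x⁻¹C` of a closed subset `C` by an element `x`. -/
def lres (S : SyncAlg) (x : S.A) (C : Set S.A) : Set S.A :=
  { y | ∃ y' u, S.synCong C y' y ∧ S.mul x y' = some u ∧ u ∈ C }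

/-- Right residual `C·x⁻¹` of a closed subset `C` by an element `x`. -/
def rres (S : SyncAlg) (x : S.A) (C : Set S.A) : Set S.A :=
  { y | ∃ y' u, S.synCong C y' y ∧ S.mul y' x = some u ∧ u ∈ C }

end SyncAlg

/-- Morphisms of synchronous algebras: preserve types, units, product and
dependency. -/
structure SyncHom (S T : SyncAlg) where
  toFun : S.A → T.A
  map_ty : ∀ x, T.ty (toFun x) = S.ty x
  map_unit : ∀ τ, toFun (S.unit τ) = T.unit τ
  map_mul : ∀ {x y z}, S.mul x y = some z →
    T.mul (toFun x) (toFun y) = some (toFun z)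
  map_dep : ∀ {x y}, S.dep x y → T.dep (toFun x) (toFun y)
/-- Synchronous words over an alphabet `α`, organized by their five types. -/
inductive SyncW (α : Type) : Type
  | wll : List (α × α) → SyncW α
  | wlllb : List (α × α) → List α → SyncW α
  | wlb : List α → SyncW α
  | wllbl : List (α × α) → List α → SyncW α
  | wbl : List α → SyncW α

namespace SyncW

variable {α : Type}

/-- The type of a synchronous word. -/
def ty : SyncW α → STy
  | wll _ => .ll | wlllb _ _ => .lllb | wlb _ => .lb | wllbl _ _ => .llbl | wbl _ => .bl

/-- Base identifications of the dependency relation on synchronous words. -/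
inductive dep0 : SyncW α → SyncW α → Prop
  | ll_lllb (w : List (α × α)) : dep0 (wll w) (wlllb w [])
  | ll_llbl (w : List (α × α)) : dep0 (wll w) (wllbl w [])
  | lb_lllb (s : List α) : dep0 (wlb s) (wlllb [] s)
  | bl_llbl (s : List α) : dep0 (wbl s) (wllbl [] s)

/-- The dependency relation: reflexive-symmetric closure of `dep0`. -/
def dep (x y : SyncW α) : Prop := x = y ∨ dep0 x y ∨ dep0 y x

/-- Concatenation of synchronous words (partial). -/
def mul : SyncW α → SyncW α → Option (SyncW α)
  | wll w, wll w' => some (wll (w ++ w'))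
  | wll w, wlllb w' s => some (wlllb (w ++ w') s)
  | wll w, wlb s => some (wlllb w s)
  | wll w, wllbl w' s => some (wllbl (w ++ w') s)
  | wll w, wbl s => some (wllbl w s)
  | wlllb w s, wlb s' => some (wlllb w (s ++ s'))
  | wlb s, wlb s' => some (wlb (s ++ s'))
  | wllbl w s, wbl s' => some (wllbl w (s ++ s'))
  | wbl s, wbl s' => some (wbl (s ++ s'))
  | _, _ => none

/-- Decoding into the pair of words represented. -/
def decode : SyncW α → List α × List α
  | wll w => (w.map Prod.fst, w.map Prod.snd)
  | wlllb w s => (w.map Prod.fst ++ s, w.map Prod.snd)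
  | wlb s => (s, [])
  | wllbl w s => (w.map Prod.fst, w.map Prod.snd ++ s)
  | wbl s => ([], s)

end SyncW

set_option maxHeartbeats 2000000 in
/-- The free synchronous algebra `Sync(α)` of synchronous words over `α`. -/
def freeSync (α : Type) : SyncAlg where
  A := SyncW α
  ty := SyncW.ty
  dep := SyncW.dep
  mul := SyncW.mul
  dep_refl x := Or.inl rfl
  dep_symm h := by
    rcases h with rfl | h | h
    · exact Or.inl rfl
    · exact Or.inr (Or.inr h)
    · exact Or.inr (Or.inl h)
  dep_eq := by
    rintro x y (rfl | h | h) hty <;> first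
      | rfl
      | (cases h <;> simp [SyncW.ty] at hty)
  mul_defined x y := by
    cases x <;> cases y <;>
      simp [SyncW.mul, SyncW.ty, STy.compat, STy.tgt, STy.src]
  ty_mul := by
    intro x y z h
    cases x <;> cases y <;>
      simp [SyncW.mul] at h <;> subst h <;> rfl
  mul_assoc x y z := by
    cases x <;> cases y <;> cases z <;>
      simp [SyncW.mul, List.append_assoc]
  dep_mul_left := by
    intro x x' y z z' h h1 h2
    rcases h with rfl | h | h
    · rw [h1] at h2; injection h2 with h2; rw [h2]; exact Or.inl rfl
    · cases h <;> cases y <;>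
        simp [SyncW.mul] at h1 h2 <;> subst h1 <;> subst h2 <;>
        first
          | exact Or.inl rfl
          | exact Or.inr (Or.inl (by constructor))
          | exact Or.inr (Or.inr (by constructor))
    · cases h <;> cases y <;>
        simp [SyncW.mul] at h1 h2 <;> subst h1 <;> subst h2 <;>
        first
          | exact Or.inl rfl
          | exact Or.inr (Or.inl (by constructor))
          | exact Or.inr (Or.inr (by constructor))
  dep_mul_right := by
    intro x x' y z z' h h1 h2
    rcases h with rfl | h | h
    · rw [h1] at h2; injection h2 with h2; rw [h2]; exact Or.inl rfl
    · cases h <;> cases y <;>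
        simp [SyncW.mul] at h1 h2 <;> subst h1 <;> subst h2 <;>
        first
          | exact Or.inl rfl
          | exact Or.inr (Or.inl (by constructor))
          | exact Or.inr (Or.inr (by constructor))
    · cases h <;> cases y <;>
        simp [SyncW.mul] at h1 h2 <;> subst h1 <;> subst h2 <;>
        first
          | exact Or.inl rfl
          | exact Or.inr (Or.inl (by constructor))
          | exact Or.inr (Or.inr (by constructor))
  unit := fun τ => match τ with
    | .ll => .wll []
    | .lllb => .wlllb [] []
    | .lb => .wlb []
    | .llbl => .wllbl [] []
    | .bl => .wbl []
  ty_unit τ := by cases τ <;> rfl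
  unit_mul := by
    intro τ x z h
    cases τ <;> cases x <;> simp [SyncW.mul] at h <;> subst h <;>
      first
        | exact Or.inl rfl
        | exact Or.inr (Or.inl (by constructor))
        | exact Or.inr (Or.inr (by constructor))
  mul_unit := by
    intro τ x z h
    cases τ <;> cases x <;> simp [SyncW.mul] at h <;> subst h <;>
      first
        | exact Or.inl rfl
        | exact Or.inr (Or.inl (by constructor))
        | exact Or.inr (Or.inr (by constructor))
  unit_lllb := rfl
  unit_llbl := rfl

/-- The closed subset of `Sync(α)` induced by a relation `R ⊆ α* × α*`. -/
def projS {α : Type} (R : Set (List α × List α)) : Set (SyncW α) :=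
  { x | x.decode ∈ R }

/-- `⟨φ, B, Acc⟩` recognizes the relation `R` when `Acc` is closed and
`proj R = φ⁻¹[Acc]`. -/
def RecognizesRel {α : Type} (B : SyncAlg) (φ : SyncHom (freeSync α) B)
    (Acc : Set B.A) (R : Set (List α × List α)) : Prop :=
  B.Closed Acc ∧ projS R = φ.toFun ⁻¹' Acc


/-!
The syntactic algebra of a closed set `C` in a synchronous algebra `S` is the quotient of `S`
by the syntactic congruence of `C`, restricted to elements of equal type, with the congruence
itself as dependency relation. If a surjective `φ : S ↠ B` recognizes `C` through a closed
`Acc`, then dependency in `B` pulls back into the syntactic congruence (contexts in `S` map to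
contexts in `B`), so the quotient map factors through `φ`. Two surjections out of `Sync(Σ)`
that factor through each other do so via mutually inverse morphisms, which gives uniqueness.
-/

namespace SyncAlg

variable {S : SyncAlg} {C : Set S.A}

theorem compat_of_mul_eq_some {x y z : S.A} (h : S.mul x y = some z) :
    (S.ty x).compat (S.ty y) :=
  (S.mul_defined x y).mp (by rw [h]; rfl)

theorem exists_mul_eq_some {x y : S.A} (h : (S.ty x).compat (S.ty y)) :
    ∃ z, S.mul x y = some z :=
  Option.isSome_iff_exists.mp ((S.mul_defined x y).mpr h)

theorem exists_mul_mul_of_mul_mul_right {x a b ab w : S.A} (hab : S.mul a b = some ab)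
    (hw : S.mul x ab = some w) : ∃ xa, S.mul x a = some xa ∧ S.mul xa b = some w := by
  have h := S.mul_assoc x a b
  rw [hab, Option.bind_some, hw] at h
  exact Option.bind_eq_some_iff.mp h

theorem exists_mul_mul_of_mul_mul_left {a b y ab w : S.A} (hab : S.mul a b = some ab)
    (hw : S.mul ab y = some w) : ∃ b', S.mul b y = some b' ∧ S.mul a b' = some w := by
  have h := S.mul_assoc a b y
  rw [hab, Option.bind_some, hw] at h
  exact Option.bind_eq_some_iff.mp h.symm

theorem mul3_eq_some_iff {x a y w : S.A} :
    S.mul3 x a y = some w ↔ ∃ xa, S.mul x a = some xa ∧ S.mul xa y = some w :=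
  Option.bind_eq_some_iff

theorem synCong_refl (a : S.A) : S.synCong C a a := by
  refine ⟨fun x y u v h1 h2 => ?_, fun x u v h1 h2 => ?_, fun y u v h1 h2 => ?_⟩ <;>
  · rw [h1, Option.some_inj] at h2
    rw [h2]

theorem synCong_symm {a b : S.A} (h : S.synCong C a b) : S.synCong C b a :=
  ⟨fun x y u v h1 h2 => (h.1 x y v u h2 h1).symm,
   fun x u v h1 h2 => (h.2.1 x v u h2 h1).symm,
   fun y u v h1 h2 => (h.2.2 y v u h2 h1).symm⟩

/-- Each context applied to `a` can be applied to `b` because the two have the same type;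
without `hty` the relation is not transitive. -/
theorem synCong_trans {a b c : S.A} (h1 : S.synCong C a b) (h2 : S.synCong C b c)
    (hty : S.ty a = S.ty b) : S.synCong C a c := by
  refine ⟨fun x y u v hu hv => ?_, fun x u v hu hv => ?_, fun y u v hu hv => ?_⟩
  · obtain ⟨s, hs, hsy⟩ := mul3_eq_some_iff.mp hu
    obtain ⟨t, ht⟩ := exists_mul_eq_some (hty ▸ compat_of_mul_eq_some hs)
    have hst : S.ty s = S.ty t := by rw [S.ty_mul hs, S.ty_mul ht, hty]
    obtain ⟨w, hw⟩ := exists_mul_eq_some (hst ▸ compat_of_mul_eq_some hsy)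
    have hm : S.mul3 x b y = some w := mul3_eq_some_iff.mpr ⟨t, ht, hw⟩
    exact (h1.1 x y u w hu hm).trans (h2.1 x y w v hm hv)
  · obtain ⟨w, hw⟩ := exists_mul_eq_some (hty ▸ compat_of_mul_eq_some hu)
    exact (h1.2.1 x u w hu hw).trans (h2.2.1 x w v hw hv)
  · obtain ⟨w, hw⟩ := exists_mul_eq_some (hty ▸ compat_of_mul_eq_some hu)
    exact (h1.2.2 y u w hu hw).trans (h2.2.2 y w v hw hv)

theorem synCong_of_dep (hC : S.Closed C) {a b : S.A} (h : S.dep a b) : S.synCong C a b := by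
  refine ⟨fun x y u v hu hv => ?_, fun x u v hu hv => hC (S.dep_mul_right h hu hv),
    fun y u v hu hv => hC (S.dep_mul_left h hu hv)⟩
  obtain ⟨s, hs, hsy⟩ := mul3_eq_some_iff.mp hu
  obtain ⟨t, ht, hty⟩ := mul3_eq_some_iff.mp hv
  exact hC (S.dep_mul_left (S.dep_mul_right h hs ht) hsy hty)

/-- The left context given by the unit of type `ll`, which is compatible with everything
and whose products depend on their right factor, separates `C` from its complement. -/
theorem mem_iff_of_synCong (hC : S.Closed C) {a b : S.A} (h : S.synCong C a b) :
    a ∈ C ↔ b ∈ C := by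
  have hcompat : ∀ x, (S.ty (S.unit .ll)).compat (S.ty x) :=
    fun _ => Or.inr (by rw [S.ty_unit]; rfl)
  obtain ⟨u, hu⟩ := exists_mul_eq_some (hcompat a)
  obtain ⟨v, hv⟩ := exists_mul_eq_some (hcompat b)
  exact (hC (S.unit_mul hu)).symm.trans ((h.2.1 _ u v hu hv).trans (hC (S.unit_mul hv)))

theorem synCong_mul_right {a a' b z z' : S.A} (h : S.synCong C a a')
    (hz : S.mul a b = some z) (hz' : S.mul a' b = some z') : S.synCong C z z' := by
  refine ⟨fun x y u v hu hv => ?_, fun x u v hu hv => ?_, fun y u v hu hv => ?_⟩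
  · obtain ⟨w, hw, hwy⟩ := mul3_eq_some_iff.mp hu
    obtain ⟨xa, hxa, hxab⟩ := exists_mul_mul_of_mul_mul_right hz hw
    obtain ⟨by', hby, hu'⟩ := exists_mul_mul_of_mul_mul_left hxab hwy
    obtain ⟨w', hw', hwy'⟩ := mul3_eq_some_iff.mp hv
    obtain ⟨xa', hxa', hxab'⟩ := exists_mul_mul_of_mul_mul_right hz' hw'
    obtain ⟨by'', hby', hv'⟩ := exists_mul_mul_of_mul_mul_left hxab' hwy'
    rw [hby, Option.some_inj] at hby'
    subst hby'
    exact h.1 x by' u v (mul3_eq_some_iff.mpr ⟨xa, hxa, hu'⟩)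
      (mul3_eq_some_iff.mpr ⟨xa', hxa', hv'⟩)
  · obtain ⟨xa, hxa, hxab⟩ := exists_mul_mul_of_mul_mul_right hz hu
    obtain ⟨xa', hxa', hxab'⟩ := exists_mul_mul_of_mul_mul_right hz' hv
    exact h.1 x b u v (mul3_eq_some_iff.mpr ⟨xa, hxa, hxab⟩)
      (mul3_eq_some_iff.mpr ⟨xa', hxa', hxab'⟩)
  · obtain ⟨by', hby, hu'⟩ := exists_mul_mul_of_mul_mul_left hz hu
    obtain ⟨by'', hby', hv'⟩ := exists_mul_mul_of_mul_mul_left hz' hv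
    rw [hby, Option.some_inj] at hby'
    subst hby'
    exact h.2.2 by' u v hu' hv'

theorem synCong_mul_left {a b b' z z' : S.A} (h : S.synCong C b b')
    (hz : S.mul a b = some z) (hz' : S.mul a b' = some z') : S.synCong C z z' := by
  refine ⟨fun x y u v hu hv => ?_, fun x u v hu hv => ?_, fun y u v hu hv =>
    h.1 a y u v (mul3_eq_some_iff.mpr ⟨z, hz, hu⟩) (mul3_eq_some_iff.mpr ⟨z', hz', hv⟩)⟩
  · obtain ⟨w, hw, hwy⟩ := mul3_eq_some_iff.mp hu
    obtain ⟨xa, hxa, hxab⟩ := exists_mul_mul_of_mul_mul_right hz hw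
    obtain ⟨w', hw', hwy'⟩ := mul3_eq_some_iff.mp hv
    obtain ⟨xa', hxa', hxab'⟩ := exists_mul_mul_of_mul_mul_right hz' hw'
    rw [hxa, Option.some_inj] at hxa'
    subst hxa'
    exact h.1 xa y u v (mul3_eq_some_iff.mpr ⟨w, hxab, hwy⟩)
      (mul3_eq_some_iff.mpr ⟨w', hxab', hwy'⟩)
  · obtain ⟨xa, hxa, hxab⟩ := exists_mul_mul_of_mul_mul_right hz hu
    obtain ⟨xa', hxa', hxab'⟩ := exists_mul_mul_of_mul_mul_right hz' hv
    rw [hxa, Option.some_inj] at hxa'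
    subst hxa'
    exact h.2.1 xa u v hxab hxab'

variable (S C) in
def SynEquiv (a b : S.A) : Prop :=
  S.ty a = S.ty b ∧ S.synCong C a b

theorem SynEquiv.mul {a a' b b' z z' : S.A} (ha : S.SynEquiv C a a') (hb : S.SynEquiv C b b')
    (hz : S.mul a b = some z) (hz' : S.mul a' b' = some z') : S.SynEquiv C z z' := by
  obtain ⟨w, hw⟩ := exists_mul_eq_some (ha.1 ▸ compat_of_mul_eq_some hz)
  have hzw : S.ty z = S.ty w := by rw [S.ty_mul hz, S.ty_mul hw, ha.1]
  have hwz' : S.ty w = S.ty z' := by rw [S.ty_mul hw, S.ty_mul hz', hb.1]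
  exact ⟨hzw.trans hwz',
    synCong_trans (synCong_mul_right ha.2 hz hw) (synCong_mul_left hb.2 hw hz') hzw⟩

theorem SynEquiv.symm {a b : S.A} (h : S.SynEquiv C a b) : S.SynEquiv C b a :=
  ⟨h.1.symm, synCong_symm h.2⟩

theorem synCong_congr {a a' b b' : S.A} (ha : S.SynEquiv C a a') (hb : S.SynEquiv C b b')
    (h : S.synCong C a b) : S.synCong C a' b' :=
  synCong_symm <| synCong_trans (synCong_symm hb.2)
    (synCong_symm (synCong_trans (synCong_symm ha.2) h ha.1.symm)) hb.1.symm

variable (S C) in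
def synSetoid : Setoid S.A where
  r := S.SynEquiv C
  iseqv := ⟨fun a => ⟨rfl, synCong_refl a⟩, SynEquiv.symm,
    fun h1 h2 => ⟨h1.1.trans h2.1, synCong_trans h1.2 h2.2 h1.1⟩⟩

theorem map_mk_mul_eq {a a' b b' : S.A} (ha : S.SynEquiv C a a') (hb : S.SynEquiv C b b') :
    (S.mul a b).map (Quotient.mk (S.synSetoid C)) =
      (S.mul a' b').map (Quotient.mk (S.synSetoid C)) := by
  have hdef : (S.mul a b).isSome = (S.mul a' b').isSome := by
    rw [Bool.eq_iff_iff, S.mul_defined, S.mul_defined, ha.1, hb.1]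
  match hz : S.mul a b, hz' : S.mul a' b' with
  | none, none => rfl
  | some z, some z' => exact congrArg some (Quotient.sound (ha.mul hb hz hz'))
  | none, some _ => simp [hz, hz'] at hdef
  | some _, none => simp [hz, hz'] at hdef

variable (S C) in
abbrev SynQuot : Type := Quotient (S.synSetoid C)

def SynQuot.ty : S.SynQuot C → STy :=
  Quotient.lift S.ty fun _ _ h => h.1

def SynQuot.dep : S.SynQuot C → S.SynQuot C → Prop :=
  Quotient.lift₂ (S.synCong C) fun _ _ _ _ ha hb =>
    propext ⟨synCong_congr ha hb, synCong_congr ha.symm hb.symm⟩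

def SynQuot.mul : S.SynQuot C → S.SynQuot C → Option (S.SynQuot C) :=
  Quotient.lift₂ (fun a b => (S.mul a b).map (Quotient.mk _)) fun _ _ _ _ => map_mk_mul_eq

theorem SynQuot.mul_mk (a b : S.A) :
    SynQuot.mul (Quotient.mk _ a) (Quotient.mk _ b) =
      (S.mul a b).map (Quotient.mk (S.synSetoid C)) :=
  rfl

theorem SynQuot.mul_mk_eq_some {a b : S.A} {q : S.SynQuot C} :
    SynQuot.mul (Quotient.mk _ a) (Quotient.mk _ b) = some q ↔
      ∃ z, S.mul a b = some z ∧ Quotient.mk _ z = q :=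
  Option.map_eq_some_iff

def syntacticAlg (hC : S.Closed C) : SyncAlg where
  A := S.SynQuot C
  ty := SynQuot.ty
  dep := SynQuot.dep
  mul := SynQuot.mul
  dep_refl := Quotient.ind synCong_refl
  dep_symm {x y} := Quotient.inductionOn₂ x y fun _ _ => synCong_symm
  dep_eq {x y} := Quotient.inductionOn₂ x y fun _ _ h hty => Quotient.sound ⟨hty, h⟩
  mul_defined x y := Quotient.inductionOn₂ x y fun a b => by
    rw [SynQuot.mul_mk, Option.isSome_map]
    exact S.mul_defined a b
  ty_mul {x y z} h := by
    induction x using Quotient.ind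
    induction y using Quotient.ind
    obtain ⟨w, hw, rfl⟩ := SynQuot.mul_mk_eq_some.mp h
    exact S.ty_mul hw
  mul_assoc x y z := Quotient.inductionOn₃ x y z fun a b c => by
    have h := congrArg (Option.map (Quotient.mk (S.synSetoid C))) (S.mul_assoc a b c)
    rw [Option.map_bind, Option.map_bind] at h
    rw [SynQuot.mul_mk, SynQuot.mul_mk, Option.bind_map, Option.bind_map]
    exact h
  dep_mul_left {x x' y z z'} h h1 h2 := by
    induction x using Quotient.ind
    induction x' using Quotient.ind
    induction y using Quotient.ind
    obtain ⟨w, hw, rfl⟩ := SynQuot.mul_mk_eq_some.mp h1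
    obtain ⟨w', hw', rfl⟩ := SynQuot.mul_mk_eq_some.mp h2
    exact synCong_mul_right h hw hw'
  dep_mul_right {x x' y z z'} h h1 h2 := by
    induction x using Quotient.ind
    induction x' using Quotient.ind
    induction y using Quotient.ind
    obtain ⟨w, hw, rfl⟩ := SynQuot.mul_mk_eq_some.mp h1
    obtain ⟨w', hw', rfl⟩ := SynQuot.mul_mk_eq_some.mp h2
    exact synCong_mul_left h hw hw'
  unit τ := Quotient.mk _ (S.unit τ)
  ty_unit := S.ty_unit
  unit_mul {τ x z} h := by
    induction x using Quotient.ind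
    obtain ⟨w, hw, rfl⟩ := SynQuot.mul_mk_eq_some.mp h
    exact synCong_of_dep hC (S.unit_mul hw)
  mul_unit {τ x z} h := by
    induction x using Quotient.ind
    obtain ⟨w, hw, rfl⟩ := SynQuot.mul_mk_eq_some.mp h
    exact synCong_of_dep hC (S.mul_unit hw)
  unit_lllb := SynQuot.mul_mk_eq_some.mpr ⟨_, S.unit_lllb, rfl⟩
  unit_llbl := SynQuot.mul_mk_eq_some.mpr ⟨_, S.unit_llbl, rfl⟩

end SyncAlg

namespace SyncHom

variable {S T : SyncAlg}

theorem map_mul3 (φ : SyncHom S T) {x a y w : S.A} (h : S.mul3 x a y = some w) :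
    T.mul3 (φ.toFun x) (φ.toFun a) (φ.toFun y) = some (φ.toFun w) := by
  obtain ⟨xa, hxa, hw⟩ := SyncAlg.mul3_eq_some_iff.mp h
  exact SyncAlg.mul3_eq_some_iff.mpr ⟨_, φ.map_mul hxa, φ.map_mul hw⟩

theorem synCong_comap (φ : SyncHom S T) {D : Set T.A} {u v : S.A}
    (h : T.synCong D (φ.toFun u) (φ.toFun v)) : S.synCong (φ.toFun ⁻¹' D) u v :=
  ⟨fun _ _ _ _ hw hw' => h.1 _ _ _ _ (φ.map_mul3 hw) (φ.map_mul3 hw'),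
   fun _ _ _ hw hw' => h.2.1 _ _ _ (φ.map_mul hw) (φ.map_mul hw'),
   fun _ _ _ hw hw' => h.2.2 _ _ _ (φ.map_mul hw) (φ.map_mul hw')⟩

/-- `hdep` also gives `φ u = φ v → η u = η v`, since `dep_eq` makes dependent elements of
equal type equal. -/
theorem exists_comp_eq {B : SyncAlg} (φ : SyncHom S B) (η : SyncHom S T)
    (hφ : Function.Surjective φ.toFun)
    (hdep : ∀ u v, B.dep (φ.toFun u) (φ.toFun v) → T.dep (η.toFun u) (η.toFun v)) :
    ∃ ψ : SyncHom B T, ∀ u, ψ.toFun (φ.toFun u) = η.toFun u := by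
  have hker : ∀ u v, φ.toFun u = φ.toFun v → η.toFun u = η.toFun v := fun u v h =>
    T.dep_eq (hdep u v (h ▸ B.dep_refl _)) (by rw [η.map_ty, η.map_ty, ← φ.map_ty, h, φ.map_ty])
  set g := Function.surjInv hφ
  have hg : ∀ u, η.toFun (g (φ.toFun u)) = η.toFun u :=
    fun u => hker _ _ (Function.surjInv_eq hφ _)
  refine ⟨{ toFun := η.toFun ∘ g
            map_ty := ?_
            map_unit := ?_
            map_mul := ?_
            map_dep := ?_ }, hg⟩
  · refine hφ.forall.mpr fun u => ?_
    rw [Function.comp_apply, hg, η.map_ty, φ.map_ty]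
  · intro τ
    rw [Function.comp_apply, ← φ.map_unit, hg, η.map_unit]
  · intro b c d h
    obtain ⟨u, rfl⟩ := hφ b
    obtain ⟨v, rfl⟩ := hφ c
    have hcompat := SyncAlg.compat_of_mul_eq_some h
    rw [φ.map_ty, φ.map_ty] at hcompat
    obtain ⟨w, hw⟩ := SyncAlg.exists_mul_eq_some hcompat
    rw [φ.map_mul hw, Option.some_inj] at h
    subst h
    simp only [Function.comp_apply, hg]
    exact η.map_mul hw
  · intro b c h
    obtain ⟨u, rfl⟩ := hφ b
    obtain ⟨v, rfl⟩ := hφ c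
    simp only [Function.comp_apply, hg]
    exact hdep u v h

end SyncHom

namespace SyncAlg

variable {S : SyncAlg} {C : Set S.A}

def syntacticHom (hC : S.Closed C) : SyncHom S (S.syntacticAlg hC) where
  toFun := Quotient.mk _
  map_ty _ := rfl
  map_unit _ := rfl
  map_mul h := SynQuot.mul_mk_eq_some.mpr ⟨_, h, rfl⟩
  map_dep h := synCong_of_dep hC h

theorem syntacticHom_surjective (hC : S.Closed C) :
    Function.Surjective (S.syntacticHom hC).toFun :=
  Quotient.mk_surjective

theorem syntacticHom_mem_image_iff (hC : S.Closed C) {a : S.A} :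
    (S.syntacticHom hC).toFun a ∈ (S.syntacticHom hC).toFun '' C ↔ a ∈ C :=
  ⟨fun ⟨_, hb, hba⟩ => (mem_iff_of_synCong hC (Quotient.exact hba).2).mp hb,
   fun h => ⟨a, h, rfl⟩⟩

theorem closed_image_syntacticHom (hC : S.Closed C) :
    (S.syntacticAlg hC).Closed ((S.syntacticHom hC).toFun '' C) := fun {x y} =>
  Quotient.inductionOn₂ x y fun _ _ h =>
    (syntacticHom_mem_image_iff hC).trans
      ((mem_iff_of_synCong hC h).trans (syntacticHom_mem_image_iff hC).symm)

theorem preimage_image_syntacticHom (hC : S.Closed C) :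
    C = (S.syntacticHom hC).toFun ⁻¹' ((S.syntacticHom hC).toFun '' C) :=
  Set.ext fun _ => (syntacticHom_mem_image_iff hC).symm

theorem exists_comp_eq_syntacticHom (hC : S.Closed C) {B : SyncAlg} (φ : SyncHom S B)
    (hφ : Function.Surjective φ.toFun) {Acc : Set B.A} (hAcc : B.Closed Acc)
    (hrec : C = φ.toFun ⁻¹' Acc) :
    ∃ ψ : SyncHom B (S.syntacticAlg hC),
      Function.Surjective ψ.toFun ∧ ∀ u, ψ.toFun (φ.toFun u) = (S.syntacticHom hC).toFun u := by
  subst hrec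
  obtain ⟨ψ, hψ⟩ := φ.exists_comp_eq (S.syntacticHom hC) hφ fun _ _ h =>
    φ.synCong_comap (synCong_of_dep hAcc h)
  refine ⟨ψ, fun q => ?_, hψ⟩
  obtain ⟨u, rfl⟩ := syntacticHom_surjective hC q
  exact ⟨φ.toFun u, hψ u⟩

end SyncAlg

theorem SyncW.decode_eq_of_dep0 {α : Type} {x y : SyncW α} (h : SyncW.dep0 x y) :
    x.decode = y.decode := by
  cases h <;> simp [SyncW.decode]

theorem closed_projS {α : Type} (R : Set (List α × List α)) : (freeSync α).Closed (projS R) := by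
  rintro x y (rfl | h | h)
  · rfl
  · exact iff_of_eq (congrArg (· ∈ R) (SyncW.decode_eq_of_dep0 h))
  · exact iff_of_eq (congrArg (· ∈ R) (SyncW.decode_eq_of_dep0 h)).symm

/-- **Syntactic morphism theorem.** For every relation
`R ⊆ α* × α*` there is a surjective synchronous algebra morphism
`η : Sync(α) ↠ A_R` recognizing `R` such that every surjective morphism
recognizing `R` factors through it via a surjective morphism; moreover `A_R`
is unique up to isomorphism (any other algebra with the same universal property
is isomorphic to it). -/
theorem syntactic_morphism_theorem (α : Type) (R : Set (List α × List α)) :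
    ∃ (AR : SyncAlg) (η : SyncHom (freeSync α) AR),
      Function.Surjective η.toFun ∧
      (∃ Acc : Set AR.A, RecognizesRel AR η Acc R) ∧
      (∀ (B : SyncAlg) (φ : SyncHom (freeSync α) B),
        Function.Surjective φ.toFun → (∃ Acc : Set B.A, RecognizesRel B φ Acc R) →
        ∃ ψ : SyncHom B AR,
          Function.Surjective ψ.toFun ∧ ∀ u, ψ.toFun (φ.toFun u) = η.toFun u) ∧
      (∀ (A' : SyncAlg) (η' : SyncHom (freeSync α) A'),
        Function.Surjective η'.toFun →
        (∃ Acc : Set A'.A, RecognizesRel A' η' Acc R) →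
        (∀ (B : SyncAlg) (φ : SyncHom (freeSync α) B),
          Function.Surjective φ.toFun → (∃ Acc : Set B.A, RecognizesRel B φ Acc R) →
          ∃ ψ : SyncHom B A',
            Function.Surjective ψ.toFun ∧ ∀ u, ψ.toFun (φ.toFun u) = η'.toFun u) →
        ∃ (f : SyncHom AR A') (g : SyncHom A' AR),
          (∀ x, g.toFun (f.toFun x) = x) ∧ (∀ x, f.toFun (g.toFun x) = x)) := by
  have hC : (freeSync α).Closed (projS R) := closed_projS R
  have hη := SyncAlg.syntacticHom_surjective hC
  have hrec : ∃ Acc, RecognizesRel _ (SyncAlg.syntacticHom hC) Acc R :=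
    ⟨_, SyncAlg.closed_image_syntacticHom hC, SyncAlg.preimage_image_syntacticHom hC⟩
  have hfactor : ∀ (B : SyncAlg) (φ : SyncHom (freeSync α) B),
      Function.Surjective φ.toFun → (∃ Acc, RecognizesRel B φ Acc R) →
      ∃ ψ : SyncHom B _, Function.Surjective ψ.toFun ∧
        ∀ u, ψ.toFun (φ.toFun u) = (SyncAlg.syntacticHom hC).toFun u :=
    fun _ φ hφ ⟨_, hAcc, hφrec⟩ => SyncAlg.exists_comp_eq_syntacticHom hC φ hφ hAcc hφrec
  refine ⟨_, SyncAlg.syntacticHom hC, hη, hrec, hfactor, fun A' η' hη' hrec' hfactor' => ?_⟩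
  obtain ⟨f, -, hf⟩ := hfactor' _ _ hη hrec
  obtain ⟨g, -, hg⟩ := hfactor A' η' hη' hrec'
  refine ⟨f, g, hη.forall.mpr fun u => ?_, hη'.forall.mpr fun u => ?_⟩
  · rw [hf, hg]
  · rw [hg, hf]
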